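/- Let A be a finite-dimensional solvable Leibniz algebra over an infinite field and K a primitive ideal of A. Then K is a generalized Frattini ideal of A if and only if K is properly contained in Nil(A). -/

import Mathlib

namespace Leib

variable (F : Type*) [Field F] {A : Type*} [NonUnitalNonAssocRing A]
  [Module F A] [SMulCommClass F A A] [IsScalarTower F A A]

/-- `S` is a subalgebra: a submodule closed under multiplication. -/
def IsSubalg (S : Submodule F A) : Prop := ∀ x ∈ S, ∀ y ∈ S, x * y ∈ S

/-- `S` is a (two-sided) ideal of the Leibniz algebra `A`. -/
def IsIdeal (S : Submodule F A) : Prop := ∀ a : A, ∀ s ∈ S, a * s ∈ S ∧ s * a ∈ S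

/-- The normalizer `N_A(C)` of a subspace `C` in `A`. -/
def normalizer (C : Submodule F A) : Submodule F A where
  carrier := {a | ∀ c ∈ C, a * c ∈ C ∧ c * a ∈ C}
  zero_mem' := by intro c hc; simp [C.zero_mem]
  add_mem' := by
    intro a b ha hb c hc
    exact ⟨by rw [add_mul]; exact C.add_mem (ha c hc).1 (hb c hc).1,
           by rw [mul_add]; exact C.add_mem (ha c hc).2 (hb c hc).2⟩
  smul_mem' := by
    intro r a ha c hc
    exact ⟨by rw [smul_mul_assoc]; exact C.smul_mem r (ha c hc).1,
           by rw [mul_smul_comm]; exact C.smul_mem r (ha c hc).2⟩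

/-- The span of all products `s * t` with `s ∈ S`, `t ∈ T`. -/
def mulSpan (S T : Submodule F A) : Submodule F A :=
  Submodule.span F {x | ∃ s ∈ S, ∃ t ∈ T, x = s * t}

/-- The (left-normed) lower central series of a subspace `S`:
`S, S·S, S·(S·S), …`. -/
def lcs (S : Submodule F A) : ℕ → Submodule F A
  | 0 => S
  | n + 1 => mulSpan F S (lcs S n)

/-- `S` is nilpotent. -/
def IsNilp (S : Submodule F A) : Prop := ∃ n, lcs F S n = ⊥

/-- The derived series of a subspace `S`. -/
def derSeries (S : Submodule F A) : ℕ → Submodule F A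
  | 0 => S
  | n + 1 => mulSpan F (derSeries S n) (derSeries S n)

/-- `S` is solvable. -/
def IsSolv (S : Submodule F A) : Prop := ∃ n, derSeries F S n = ⊥

/-- `C` is a Cartan subalgebra of the subalgebra `K`: a nilpotent subalgebra of `K`
that is self-normalizing in `K`. -/
def IsCartanOf (K C : Submodule F A) : Prop :=
  C ≤ K ∧ IsSubalg F C ∧ IsNilp F C ∧ normalizer F C ⊓ K = C

/-- `H` is a generalized Frattini ideal (Cartan-subalgebra definition): `H` is proper and
whenever `A = H + N_A(C)` for `C` a Cartan subalgebra of an ideal `K` of `A`,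
it follows that `A = N_A(C)`. -/
def GenFrattiniC (H : Submodule F A) : Prop :=
  H ≠ ⊤ ∧ ∀ K C : Submodule F A, IsIdeal F K → IsCartanOf F K C →
    H ⊔ normalizer F C = ⊤ → normalizer F C = ⊤

/-- `H` is a generalized Frattini ideal (nilpotency characterization): `H` is proper and
every ideal `J ⊇ H` with `J/H` nilpotent is nilpotent. -/
def GenFrattiniN (H : Submodule F A) : Prop :=
  H ≠ ⊤ ∧ ∀ J : Submodule F A, IsIdeal F J → H ≤ J →
    (∃ n, lcs F J n ≤ H) → IsNilp F J

/-- The center `Z(A)`. -/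
def center : Submodule F A where
  carrier := {z | ∀ a : A, z * a = 0 ∧ a * z = 0}
  zero_mem' := by intro a; simp
  add_mem' := by
    intro x y hx hy a
    exact ⟨by rw [add_mul, (hx a).1, (hy a).1, add_zero],
           by rw [mul_add, (hx a).2, (hy a).2, add_zero]⟩
  smul_mem' := by
    intro r x hx a
    exact ⟨by rw [smul_mul_assoc, (hx a).1, smul_zero],
           by rw [mul_smul_comm, (hx a).2, smul_zero]⟩

/-- `M` is a maximal subalgebra of `A`. -/
def IsMaxSubalg (M : Submodule F A) : Prop :=
  IsSubalg F M ∧ M ≠ ⊤ ∧ ∀ S : Submodule F A, IsSubalg F S → M < S → S = ⊤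

/-- `I` is a maximal ideal of `A`. -/
def IsMaxIdeal (I : Submodule F A) : Prop :=
  IsIdeal F I ∧ I ≠ ⊤ ∧ ∀ J : Submodule F A, IsIdeal F J → I < J → J = ⊤

/-- `K` is a primitive ideal: `Φ(A/K) = 0`, `A/K` has a unique minimal ideal, and
`dim (A/K) > 1`.  (Ideals and maximal subalgebras of `A/K` are stated via the
correspondence with ideals and maximal subalgebras of `A` containing `K`.) -/
def IsPrimitiveIdeal (K : Submodule F A) : Prop :=
  IsIdeal F K ∧
  (∀ J : Submodule F A, IsIdeal F J → K ≤ J →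
      (∀ M : Submodule F A, IsMaxSubalg F M → K ≤ M → J ≤ M) → J = K) ∧
  (∃! B : Submodule F A, IsIdeal F B ∧ K < B ∧
      ∀ B' : Submodule F A, IsIdeal F B' → K < B' → ¬ B' < B) ∧
  1 < Module.finrank F (A ⧸ K)

end Leib

/-!
Let `B` be the unique minimal ideal of `A` over the primitive ideal `K`; in finite dimension
every ideal strictly above `K` contains `B`. Solvability makes `B/K` abelian, so if `K` is
generalized Frattini then `B` is nilpotent and `K < B ≤ Nil(A)`. Conversely, let `J ⊇ K` be an
ideal with `J/K` nilpotent. Minimality of `B/K` forces `JB + BJ ⊆ K` (otherwise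
`B ⊆ Jᵏ + K` for every `k`), so `J` lies in the centralizer `C = centralizerMod K B` of `B/K`.
Since `Φ(A/K) = 0` there is a maximal subalgebra `M ⊇ K` with `A = B + M`; then `(C ∩ M) + K`
is an ideal not containing `B`, so `C ∩ M ⊆ K` and `C = B`. Hence `J ≤ B ≤ Nil(A)`.
-/

namespace Leib

def IsLeibniz (A : Type*) [Add A] [Mul A] : Prop :=
  ∀ a b c : A, a * (b * c) = a * b * c + b * (a * c)

theorem IsLeibniz.mul_mul_eq_sub {A : Type*} [NonUnitalNonAssocRing A] (hA : IsLeibniz A)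
    (a b c : A) : a * b * c = a * (b * c) - b * (a * c) :=
  eq_sub_of_add_eq (hA a b c).symm

variable {F : Type*} [Field F] {A : Type*} [NonUnitalNonAssocRing A] [Module F A]

section mulSpan

variable {S S' T T' Q : Submodule F A}

theorem mul_mem_mulSpan {s t : A} (hs : s ∈ S) (ht : t ∈ T) : s * t ∈ mulSpan F S T :=
  Submodule.subset_span ⟨s, hs, t, ht, rfl⟩

theorem mulSpan_le : mulSpan F S T ≤ Q ↔ ∀ s ∈ S, ∀ t ∈ T, s * t ∈ Q := by
  refine ⟨fun h s hs t ht => h (mul_mem_mulSpan hs ht), fun h => ?_⟩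
  rw [mulSpan, Submodule.span_le]
  rintro _ ⟨s, hs, t, ht, rfl⟩
  exact h s hs t ht

theorem mulSpan_mono (hS : S ≤ S') (hT : T ≤ T') : mulSpan F S T ≤ mulSpan F S' T' :=
  mulSpan_le.mpr fun _ hs _ ht => mul_mem_mulSpan (hS hs) (hT ht)

theorem IsIdeal.mulSpan_le_left (hS : IsIdeal F S) (T : Submodule F A) : mulSpan F S T ≤ S :=
  mulSpan_le.mpr fun s hs t _ => (hS t s hs).2

theorem IsIdeal.mulSpan_le_right (S : Submodule F A) (hT : IsIdeal F T) : mulSpan F S T ≤ T :=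
  mulSpan_le.mpr fun s _ t ht => (hT s t ht).1

theorem mulSpan_sup_left_le : mulSpan F (S ⊔ S') T ≤ mulSpan F S T ⊔ mulSpan F S' T := by
  refine mulSpan_le.mpr fun _ hs t ht => ?_
  obtain ⟨x, hx, y, hy, rfl⟩ := Submodule.mem_sup.mp hs
  rw [add_mul]
  exact Submodule.add_mem_sup (mul_mem_mulSpan hx ht) (mul_mem_mulSpan hy ht)

theorem mulSpan_sup_right_le : mulSpan F S (T ⊔ T') ≤ mulSpan F S T ⊔ mulSpan F S T' := by
  refine mulSpan_le.mpr fun s hs _ ht => ?_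
  obtain ⟨x, hx, y, hy, rfl⟩ := Submodule.mem_sup.mp ht
  rw [mul_add]
  exact Submodule.add_mem_sup (mul_mem_mulSpan hs hx) (mul_mem_mulSpan hs hy)

theorem mulSpan_sup_sup_le (hQ : IsIdeal F Q) :
    mulSpan F (S ⊔ Q) (T ⊔ Q) ≤ mulSpan F S T ⊔ Q := by
  refine mulSpan_le.mpr fun _ hs _ ht => ?_
  obtain ⟨x, hx, k, hk, rfl⟩ := Submodule.mem_sup.mp hs
  obtain ⟨y, hy, k', hk', rfl⟩ := Submodule.mem_sup.mp ht
  have h : (x + k) * (y + k') = x * y + (x * k' + k * (y + k')) := by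
    rw [add_mul, mul_add]; abel
  rw [h]
  exact Submodule.add_mem_sup (mul_mem_mulSpan hx hy)
    (Q.add_mem (hQ x k' hk').1 (hQ (y + k') k hk).2)

end mulSpan

section ideals

variable {S T : Submodule F A}

theorem IsIdeal.sup (hS : IsIdeal F S) (hT : IsIdeal F T) : IsIdeal F (S ⊔ T) := by
  intro a x hx
  obtain ⟨s, hs, t, ht, rfl⟩ := Submodule.mem_sup.mp hx
  rw [mul_add, add_mul]
  exact ⟨Submodule.add_mem_sup (hS a s hs).1 (hT a t ht).1,
    Submodule.add_mem_sup (hS a s hs).2 (hT a t ht).2⟩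

theorem IsSubalg.ideal_sup (hS : IsIdeal F S) (hT : IsSubalg F T) : IsSubalg F (S ⊔ T) := by
  intro x hx y hy
  obtain ⟨b, hb, m, hm, rfl⟩ := Submodule.mem_sup.mp hx
  obtain ⟨b', hb', m', hm', rfl⟩ := Submodule.mem_sup.mp hy
  have h : (b + m) * (b' + m') = (b * (b' + m') + m * b') + m * m' := by
    rw [add_mul, mul_add m, ← add_assoc]
  rw [h]
  exact Submodule.add_mem_sup (S.add_mem (hS (b' + m') b hb).2 (hS m b' hb').1) (hT m hm m' hm')

theorem lcs_mono (h : S ≤ T) (n : ℕ) : lcs F S n ≤ lcs F T n := by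
  induction n with
  | zero => exact h
  | succ n ih => exact mulSpan_mono h ih

theorem derSeries_mono (h : S ≤ T) (n : ℕ) : derSeries F S n ≤ derSeries F T n := by
  induction n with
  | zero => exact h
  | succ n ih => exact mulSpan_mono ih ih

theorem IsNilp.mono (hT : IsNilp F T) (h : S ≤ T) : IsNilp F S := by
  obtain ⟨n, hn⟩ := hT
  exact ⟨n, le_bot_iff.mp (hn ▸ lcs_mono h n)⟩

theorem isLeast_of_existsUnique_minimal [Module.Finite F A] {K : Submodule F A}
    (hB : ∃! B : Submodule F A, IsIdeal F B ∧ K < B ∧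
      ∀ B' : Submodule F A, IsIdeal F B' → K < B' → ¬ B' < B) :
    ∃ B, IsLeast {J : Submodule F A | IsIdeal F J ∧ K < J} B := by
  obtain ⟨B, ⟨hBid, hKB, -⟩, huniq⟩ := hB
  refine ⟨B, ⟨hBid, hKB⟩, fun J ⟨hJ, hKJ⟩ => ?_⟩
  obtain ⟨I, ⟨hI, hKI, hIJ⟩, hmin⟩ :=
    wellFounded_lt.has_min {I : Submodule F A | IsIdeal F I ∧ K < I ∧ I ≤ J}
      ⟨J, hJ, hKJ, le_rfl⟩
  have hIB : I = B := huniq I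
    ⟨hI, hKI, fun B' hB' hKB' hB'I => hmin B' ⟨hB', hKB', hB'I.le.trans hIJ⟩ hB'I⟩
  exact hIB ▸ hIJ

theorem le_derSeries_sup {B K : Submodule F A} (hK : IsIdeal F K)
    (h : B ≤ mulSpan F B B ⊔ K) (n : ℕ) : B ≤ derSeries F B n ⊔ K := by
  induction n with
  | zero => exact le_sup_left
  | succ n ih =>
    exact h.trans (sup_le ((mulSpan_mono ih ih).trans (mulSpan_sup_sup_le hK)) le_sup_right)

end ideals

variable [SMulCommClass F A A] [IsScalarTower F A A]

def centralizerMod (K B : Submodule F A) : Submodule F A where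
  carrier := {x | ∀ b ∈ B, x * b ∈ K ∧ b * x ∈ K}
  zero_mem' := by intro b _; simp [K.zero_mem]
  add_mem' := by
    intro x y hx hy b hb
    rw [add_mul, mul_add]
    exact ⟨K.add_mem (hx b hb).1 (hy b hb).1, K.add_mem (hx b hb).2 (hy b hb).2⟩
  smul_mem' := by
    intro r x hx b hb
    rw [smul_mul_assoc, mul_smul_comm]
    exact ⟨K.smul_mem r (hx b hb).1, K.smul_mem r (hx b hb).2⟩

section leibniz

variable {S T : Submodule F A} (hA : IsLeibniz A)
include hA

theorem IsLeibniz.mul_mem_of_mem_mulSpan (hS : IsIdeal F S)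
    (hT : IsIdeal F T) (a : A) {x : A} (hx : x ∈ mulSpan F S T) :
    a * x ∈ mulSpan F S T ∧ x * a ∈ mulSpan F S T ⊔ mulSpan F T S := by
  have key : mulSpan F S T ≤ (mulSpan F S T).comap (LinearMap.mulLeft F a) ⊓
      (mulSpan F S T ⊔ mulSpan F T S).comap (LinearMap.mulRight F a) := by
    refine mulSpan_le.mpr fun s hs t ht => ?_
    simp only [Submodule.mem_inf, Submodule.mem_comap, LinearMap.mulLeft_apply,
      LinearMap.mulRight_apply, hA a s t, hA.mul_mul_eq_sub s t a]
    exact ⟨add_mem (mul_mem_mulSpan (hS a s hs).1 ht) (mul_mem_mulSpan hs (hT a t ht).1),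
      sub_mem (Submodule.mem_sup_left (mul_mem_mulSpan hs (hT a t ht).2))
        (Submodule.mem_sup_right (mul_mem_mulSpan ht (hS a s hs).2))⟩
  exact key hx

theorem IsLeibniz.isIdeal_mulSpan_sup_mulSpan (hS : IsIdeal F S) (hT : IsIdeal F T) :
    IsIdeal F (mulSpan F S T ⊔ mulSpan F T S) := by
  intro a x hx
  obtain ⟨u, hu, v, hv, rfl⟩ := Submodule.mem_sup.mp hx
  obtain ⟨hau, hua⟩ := hA.mul_mem_of_mem_mulSpan hS hT a hu
  obtain ⟨hav, hva⟩ := hA.mul_mem_of_mem_mulSpan hT hS a hv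
  rw [sup_comm] at hva
  rw [mul_add, add_mul]
  exact ⟨add_mem (Submodule.mem_sup_left hau) (Submodule.mem_sup_right hav), add_mem hua hva⟩

theorem IsLeibniz.isIdeal_mulSpan_self (hS : IsIdeal F S) : IsIdeal F (mulSpan F S S) := by
  simpa using hA.isIdeal_mulSpan_sup_mulSpan hS hS

omit [SMulCommClass F A A] in
theorem IsLeibniz.mulSpan_lcs_le (J : Submodule F A) (p q : ℕ) :
    mulSpan F (lcs F J p) (lcs F J q) ≤ lcs F J (p + q + 1) := by
  induction p generalizing q with
  | zero => rw [Nat.zero_add]; exact le_rfl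
  | succ p ih =>
    refine mulSpan_le.mpr fun x hx t ht => ?_
    have key : mulSpan F J (lcs F J p) ≤
        (lcs F J (p + 1 + q + 1)).comap (LinearMap.mulRight F t) := by
      refine mulSpan_le.mpr fun j hj w hw => ?_
      rw [Submodule.mem_comap, LinearMap.mulRight_apply, hA.mul_mul_eq_sub j w t,
        show p + 1 + q + 1 = p + q + 1 + 1 by omega]
      exact sub_mem (mul_mem_mulSpan hj (ih q (mul_mem_mulSpan hw ht)))
        (ih (q + 1) (mul_mem_mulSpan hw (mul_mem_mulSpan hj ht)))
    exact key hx

omit [SMulCommClass F A A] in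
theorem IsLeibniz.le_lcs_sup {B J K : Submodule F A} (hK : IsIdeal F K) (hBJ : B ≤ J)
    (h : B ≤ mulSpan F J B ⊔ mulSpan F B J ⊔ K) (n : ℕ) : B ≤ lcs F J n ⊔ K := by
  induction n with
  | zero => exact hBJ.trans le_sup_left
  | succ n ih =>
    have hJB : mulSpan F J B ≤ lcs F J (n + 1) ⊔ K :=
      (mulSpan_mono le_rfl ih).trans
        (mulSpan_sup_right_le.trans (sup_le_sup_left (hK.mulSpan_le_right J) _))
    have hBJ : mulSpan F B J ≤ lcs F J (n + 1) ⊔ K :=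
      (mulSpan_mono ih le_rfl).trans (mulSpan_sup_left_le.trans
        (sup_le_sup (hA.mulSpan_lcs_le J n 0) (hK.mulSpan_le_left J)))
    exact h.trans (sup_le (sup_le hJB hBJ) le_sup_right)

theorem IsLeibniz.isIdeal_centralizerMod {K B : Submodule F A} (hK : IsIdeal F K)
    (hB : IsIdeal F B) : IsIdeal F (centralizerMod K B) := by
  intro a x hx
  refine ⟨fun b hb => ⟨?_, ?_⟩, fun b hb => ⟨?_, ?_⟩⟩
  · rw [hA.mul_mul_eq_sub]
    exact K.sub_mem (hK a _ (hx b hb).1).1 (hx (a * b) (hB a b hb).1).1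
  · rw [hA]
    exact K.add_mem (hx (b * a) (hB a b hb).2).2 (hK a _ (hx b hb).2).1
  · rw [hA.mul_mul_eq_sub]
    exact K.sub_mem (hx (a * b) (hB a b hb).1).1 (hK a _ (hx b hb).1).1
  · rw [hA]
    exact K.add_mem (hK a _ (hx b hb).2).2 (hx (b * a) (hB a b hb).2).1

theorem IsLeibniz.isIdeal_centralizerMod_inf_sup {K B M : Submodule F A} (hK : IsIdeal F K)
    (hB : IsIdeal F B) (hM : IsSubalg F M) (hBM : B ⊔ M = ⊤) :
    IsIdeal F (centralizerMod K B ⊓ M ⊔ K) := by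
  have hC := hA.isIdeal_centralizerMod hK hB
  intro a y hy
  obtain ⟨u, hu, k, hk, rfl⟩ := Submodule.mem_sup.mp hy
  obtain ⟨b, hb, m, hm, rfl⟩ := Submodule.mem_sup.mp (hBM ▸ Submodule.mem_top : a ∈ B ⊔ M)
  have hl : (b + m) * (u + k) = m * u + (b * u + (b + m) * k) := by
    rw [mul_add, add_mul]; abel
  have hr : (u + k) * (b + m) = u * m + (u * b + k * (b + m)) := by
    rw [add_mul, mul_add]; abel
  rw [hl, hr]
  exact ⟨Submodule.add_mem_sup ⟨(hC m u hu.1).1, hM m hm u hu.2⟩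
      (K.add_mem (hu.1 b hb).2 (hK (b + m) k hk).1),
    Submodule.add_mem_sup ⟨(hC m u hu.1).2, hM u hu.2 m hm⟩
      (K.add_mem (hu.1 b hb).1 (hK (b + m) k hk).2)⟩

end leibniz

section leastIdeal

variable {K B : Submodule F A} (hA : IsLeibniz A) (hK : IsIdeal F K)
  (hB : IsLeast {J : Submodule F A | IsIdeal F J ∧ K < J} B)
include hA hK hB

theorem mulSpan_self_le_of_isLeast (hsolv : IsSolv F (⊤ : Submodule F A)) :
    mulSpan F B B ≤ K := by
  by_contra hBK
  have hB' : B ≤ mulSpan F B B ⊔ K :=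
    hB.2 ⟨(hA.isIdeal_mulSpan_self hB.1.1).sup hK, right_lt_sup.mpr hBK⟩
  obtain ⟨n, hn⟩ := hsolv
  have hBn : derSeries F B n = ⊥ := le_bot_iff.mp (hn ▸ derSeries_mono le_top n)
  exact hB.1.2.not_ge (by simpa [hBn] using le_derSeries_sup hK hB' n)

theorem mulSpan_sup_mulSpan_le_of_isLeast {J : Submodule F A} (hJ : IsIdeal F J) (hBJ : B ≤ J)
    {n : ℕ} (hJn : lcs F J n ≤ K) : mulSpan F J B ⊔ mulSpan F B J ≤ K := by
  by_contra hW
  have hB' : B ≤ mulSpan F J B ⊔ mulSpan F B J ⊔ K :=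
    hB.2 ⟨(hA.isIdeal_mulSpan_sup_mulSpan hJ hB.1.1).sup hK, right_lt_sup.mpr hW⟩
  exact hB.1.2.not_ge ((hA.le_lcs_sup hK hBJ hB' n).trans (sup_le hJn le_rfl))

theorem centralizerMod_le_of_isLeast
    (hphi : ∀ J : Submodule F A, IsIdeal F J → K ≤ J →
      (∀ M : Submodule F A, IsMaxSubalg F M → K ≤ M → J ≤ M) → J = K)
    (hB2 : mulSpan F B B ≤ K) : centralizerMod K B ≤ B := by
  obtain ⟨M, hM, hKM, hBM⟩ : ∃ M, IsMaxSubalg F M ∧ K ≤ M ∧ ¬ B ≤ M := by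
    by_contra! h
    exact hB.1.2.ne' (hphi B hB.1.1 hB.1.2.le h)
  have hBMtop : B ⊔ M = ⊤ := hM.2.2 _ (hM.1.ideal_sup hB.1.1) (right_lt_sup.mpr hBM)
  have hCM : centralizerMod K B ⊓ M ≤ K := by
    by_contra h
    have hBle :=
      hB.2 ⟨hA.isIdeal_centralizerMod_inf_sup hK hB.1.1 hM.1 hBMtop, right_lt_sup.mpr h⟩
    exact hBM (hBle.trans (sup_le inf_le_right hKM))
  have hBC : B ≤ centralizerMod K B := fun x hx b hb =>
    ⟨hB2 (mul_mem_mulSpan hx hb), hB2 (mul_mem_mulSpan hb hx)⟩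
  calc centralizerMod K B = (B ⊔ M) ⊓ centralizerMod K B := by rw [hBMtop, top_inf_eq]
    _ = B ⊔ M ⊓ centralizerMod K B := sup_inf_assoc_of_le M hBC
    _ ≤ B := sup_le le_rfl (inf_comm M _ ▸ hCM.trans hB.1.2.le)

theorem le_of_lcs_le_of_isLeast (hsolv : IsSolv F (⊤ : Submodule F A))
    (hphi : ∀ J : Submodule F A, IsIdeal F J → K ≤ J →
      (∀ M : Submodule F A, IsMaxSubalg F M → K ≤ M → J ≤ M) → J = K)
    {J : Submodule F A} (hJ : IsIdeal F J) (hKJ : K ≤ J) {n : ℕ} (hJn : lcs F J n ≤ K) :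
    J ≤ B := by
  rcases hKJ.eq_or_lt with rfl | hKJ
  · exact hB.1.2.le
  have hW := mulSpan_sup_mulSpan_le_of_isLeast hA hK hB hJ (hB.2 ⟨hJ, hKJ⟩) hJn
  have hJC : J ≤ centralizerMod K B := fun x hx b hb =>
    ⟨hW (Submodule.mem_sup_left (mul_mem_mulSpan hx hb)),
      hW (Submodule.mem_sup_right (mul_mem_mulSpan hb hx))⟩
  exact hJC.trans (centralizerMod_le_of_isLeast hA hK hB hphi
    (mulSpan_self_le_of_isLeast hA hK hB hsolv))

end leastIdeal

end Leib

open Leib in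
theorem primitive_genFrattini_iff_lt_nil_general
    {F : Type*} [Field F] {A : Type*} [NonUnitalNonAssocRing A]
    [Module F A] [SMulCommClass F A A] [IsScalarTower F A A] [Module.Finite F A]
    (leib : ∀ a b c : A, a * (b * c) = a * b * c + b * (a * c))
    (hAsolv : IsSolv F (⊤ : Submodule F A))
    (N : Submodule F A) (hN : IsIdeal F N) (hNnilp : IsNilp F N)
    (hNmax : ∀ M : Submodule F A, IsIdeal F M → IsNilp F M → M ≤ N)
    (K : Submodule F A) (hK : IsPrimitiveIdeal F K) :
    GenFrattiniN F K ↔ K < N := by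
  obtain ⟨hKid, hphi, hBmin, -⟩ := hK
  obtain ⟨B, hB⟩ := isLeast_of_existsUnique_minimal hBmin
  have hB2 : mulSpan F B B ≤ K := mulSpan_self_le_of_isLeast leib hKid hB hAsolv
  constructor
  · rintro ⟨-, hGF⟩
    exact hB.1.2.trans_le (hNmax B hB.1.1 (hGF B hB.1.1 hB.1.2.le ⟨1, hB2⟩))
  · intro hKN
    have hBN : B ≤ N := hB.2 ⟨hN, hKN⟩
    exact ⟨hKN.ne_top, fun J hJ hKJ ⟨n, hJn⟩ =>
      hNnilp.mono ((le_of_lcs_le_of_isLeast leib hKid hB hAsolv hphi hJ hKJ hJn).trans hBN)⟩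

open Leib in
/-- for a solvable `A` and a primitive ideal `K`, `K` is generalized
Frattini iff `K` is properly contained in `Nil(A)`. -/
theorem primitive_genFrattini_iff_lt_nil
    {F : Type*} [Field F] [Infinite F] {A : Type*} [NonUnitalNonAssocRing A]
    [Module F A] [SMulCommClass F A A] [IsScalarTower F A A] [Module.Finite F A]
    (leib : ∀ a b c : A, a * (b * c) = a * b * c + b * (a * c))
    (hAsolv : IsSolv F (⊤ : Submodule F A))
    (N : Submodule F A) (hN : IsIdeal F N) (hNnilp : IsNilp F N)
    (hNmax : ∀ M : Submodule F A, IsIdeal F M → IsNilp F M → M ≤ N)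
    (K : Submodule F A) (hK : IsPrimitiveIdeal F K) :
    GenFrattiniN F K ↔ K < N :=
  primitive_genFrattini_iff_lt_nil_general leib hAsolv N hN hNnilp hNmax K hK
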